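/- arXiv:2312.11462 — 2 statements merged into one kernel-verified Lean document; each statement's English description precedes it below -/
import Mathlib

section
/- For any 0 < α < 1, 0 < α' < 1, integers k ≥ 1 and n ≥ 1, let φ(x) = x + (x−1) Σ_{i=1}^{k} α'^i x^i. Then (1 − α · φ(α)^n)/(1 − α) > (1 − α^{n+1})/(1 − α). -/
/-- The vertical cascade increases expected accepted tokens. -/
theorem stmt_6 (α α' : ℝ) (hα0 : 0 < α) (hα1 : α < 1) (hα'0 : 0 < α') (hα'1 : α' < 1)
    (k n : ℕ) (hk : 1 ≤ k) (hn : 1 ≤ n) :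
    (1 - α * (α + (α - 1) * ∑ i ∈ Finset.range k, α' ^ (i + 1) * α ^ (i + 1)) ^ n) / (1 - α) >
      (1 - α ^ (n + 1)) / (1 - α) := by
  set S : ℝ := ∑ i ∈ Finset.range k, α' ^ (i + 1) * α ^ (i + 1) with hS
  have hne : (Finset.range k).Nonempty := ⟨0, Finset.mem_range.mpr hk⟩
  have hSpos : 0 < S := by
    apply Finset.sum_pos _ hne
    intro i _
    positivity
  have hSlt : S < ∑ i ∈ Finset.range k, α ^ (i + 1) := by
    apply Finset.sum_lt_sum_of_nonempty hne
    intro i _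
    have h1 : α' ^ (i + 1) < 1 := pow_lt_one₀ (le_of_lt hα'0) hα'1 (Nat.succ_ne_zero i)
    have h2 : 0 < α ^ (i + 1) := by positivity
    nlinarith
  have hgeom : ∑ i ∈ Finset.range k, α ^ (i + 1) = α * ((α ^ k - 1) / (α - 1)) := by
    rw [← geom_sum_eq (ne_of_lt hα1) k, Finset.mul_sum]
    exact Finset.sum_congr rfl (fun i _ => by ring)
  have hαk : 0 < α ^ k := by positivity
  have h1α : 0 < 1 - α := by linarith
  have hbound : (1 - α) * S < α := by
    have : (1 - α) * (∑ i ∈ Finset.range k, α ^ (i + 1)) = α * (1 - α ^ k) := by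
      have hne1 : α - 1 ≠ 0 := by linarith
      rw [hgeom]; field_simp; ring
    nlinarith
  have hφpos : 0 < α + (α - 1) * S := by nlinarith
  have hφlt : α + (α - 1) * S < α := by nlinarith
  have hpow : (α + (α - 1) * S) ^ n < α ^ n :=
    pow_lt_pow_left₀ hφlt (le_of_lt hφpos) (by omega)
  have hnum : 1 - α ^ (n + 1) < 1 - α * (α + (α - 1) * S) ^ n := by
    have := mul_lt_mul_of_pos_left hpow hα0
    rw [← pow_succ'] at this
    linarith
  exact (div_lt_div_iff_of_pos_right h1α).mpr hnum
end

section
/- Let 0 < α < 1, 0 < α' < 1, k ≥ 1, n ≥ 1, c_{d1} > 0, and φ(x) = x + (x−1)Σ_{i=1}^{k} α'^i x^i. Then the vertical cascade EWIF with negligible smallest-model cost, E = (1 − α φ(α)^n)/((1−α)(1 + n c_{d1})), is strictly greater than the plain speculative decoding EWIF (1 − α^{n+1})/((1−α)(1 + n c_{d1})). -/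
/-- The vertical cascade EWIF (negligible smallest-model cost) strictly exceeds
the plain speculative decoding EWIF. -/
theorem stmt_14 (α α' : ℝ) (hα0 : 0 < α) (hα1 : α < 1) (hα'0 : 0 < α') (hα'1 : α' < 1)
    (k n : ℕ) (hk : 1 ≤ k) (hn : 1 ≤ n) (c : ℝ) (hc : 0 < c) :
    (1 - α * (α + (α - 1) * ∑ i ∈ Finset.range k, α' ^ (i + 1) * α ^ (i + 1)) ^ n) /
        ((1 - α) * (1 + n * c)) >
      (1 - α ^ (n + 1)) / ((1 - α) * (1 + n * c)) := by
  set S := ∑ i ∈ Finset.range k, α' ^ (i + 1) * α ^ (i + 1) with hSdef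
  have hS_pos : 0 < S := by
    apply Finset.sum_pos
    · intro i _
      positivity
    · exact Finset.nonempty_range_iff.mpr (by omega)
  have hS_le : S ≤ α' * α * ∑ i ∈ Finset.range k, α ^ i := by
    rw [Finset.mul_sum]
    apply Finset.sum_le_sum
    intro i _
    have h1 : α' ^ (i + 1) ≤ α' := by
      calc α' ^ (i + 1) ≤ α' ^ 1 :=
        pow_le_pow_of_le_one hα'0.le hα'1.le (by omega)
      _ = α' := pow_one α'
    have h2 : α ^ (i + 1) = α * α ^ i := by ring
    have h3 : 0 ≤ α ^ (i + 1) := by positivity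
    calc α' ^ (i + 1) * α ^ (i + 1) ≤ α' * α ^ (i + 1) :=
      mul_le_mul_of_nonneg_right h1 h3
    _ = α' * α * α ^ i := by rw [h2]; ring
  have hgeom : (1 - α) * ∑ i ∈ Finset.range k, α ^ i = 1 - α ^ k := by
    have := geom_sum_mul α k
    nlinarith [this]
  have hαk : 0 < α ^ k := by positivity
  have h1α : (0:ℝ) < 1 - α := by linarith
  have hS_lt : (1 - α) * S < α := by
    have h4 : (1 - α) * S ≤ (1 - α) * (α' * α * ∑ i ∈ Finset.range k, α ^ i) :=
      mul_le_mul_of_nonneg_left hS_le h1α.le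
    have h5 : (1 - α) * (α' * α * ∑ i ∈ Finset.range k, α ^ i)
        = α' * α * (1 - α ^ k) := by
      rw [← hgeom]; ring
    have h7 : α' * (1 - α ^ k) < 1 := by nlinarith
    nlinarith [mul_pos hα'0 hα0]
  set φ := α + (α - 1) * S with hφdef
  have hφ0 : 0 ≤ φ := by
    have : φ = α - (1 - α) * S := by rw [hφdef]; ring
    linarith [this, hS_lt]
  have hφα : φ < α := by
    have : (α - 1) * S < 0 := mul_neg_of_neg_of_pos (by linarith) hS_pos
    linarith
  have hpow : φ ^ n < α ^ n := pow_lt_pow_left₀ hφα hφ0 (by omega)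
  have hnum : 1 - α ^ (n + 1) < 1 - α * φ ^ n := by
    have : α * φ ^ n < α * α ^ n := mul_lt_mul_of_pos_left hpow hα0
    have h6 : α * α ^ n = α ^ (n + 1) := by ring
    linarith
  have hden : 0 < (1 - α) * (1 + (n : ℝ) * c) := by
    apply mul_pos h1α
    have : (0:ℝ) ≤ (n : ℝ) * c := by positivity
    linarith
  exact div_lt_div_of_pos_right hnum hden
end
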